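/- Fix a real number λ ≠ 0. For every integer n ≥ 0, the polynomial identity Σ_{l=0}^{n} S_{1,λ}(n,l)(x)_l = Σ_{k=0}^{n} S^{(1)}_{J,λ}(n,k)(x)_{k,λ} holds (as an identity of polynomials in the variable x). -/

import Mathlib

/-!
Write `L = log_λ(1+t) = ((1+t)^λ - 1)/λ`. Since `(x)_{n,λ} = λ^n (x/λ)_n`, the series `e_λ^x(t)`
is `(1+t)^{x/λ}` with `t` rescaled by `λ`, so `e_λ^x(L) = (1+t)^x`. Comparing coefficients gives
`(x)_n = Σ_k S_{1,λ}(n,k) (x)_{k,λ}` with `S_{1,λ}(n,k) = n!/k! [t^n] L^k`, and by linear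
independence of the `(x)_{k,λ}` these are the given numbers `S1 n k`. Since `(L∘L)^k = L^k ∘ L`,
`S^{(1)}_{J,λ}(n,k) = Σ_m S_{1,λ}(n,m) S_{1,λ}(m,k)`, and substituting the expansion of each `(x)_l`
into `Σ_l S_{1,λ}(n,l) (x)_l` yields the right-hand side.
-/

open Finset

/-- The degenerate falling factorial `(x)_{n,λ} = x(x−λ)⋯(x−(n−1)λ)`;
for `lam = 1` it is the ordinary falling factorial `(x)_n`. -/
noncomputable def dff (lam : ℝ) (n : ℕ) (x : ℝ) : ℝ :=
  ∏ i ∈ Finset.range n, (x - i * lam)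

/-- The degenerate exponential `e_λ^x(t) = Σ_{n≥0} (x)_{n,λ} t^n/n!`. -/
noncomputable def degExp (lam x : ℝ) : PowerSeries ℝ :=
  PowerSeries.mk fun n => dff lam n x / n.factorial

/-- The degenerate logarithm `log_λ(1+t) = Σ_{n≥1} λ^{n−1}(1)_{n,1/λ} t^n/n!`. -/
noncomputable def degLog (lam : ℝ) : PowerSeries ℝ :=
  PowerSeries.mk fun n =>
    if n = 0 then 0 else lam ^ (n - 1) * dff (1 / lam) n 1 / n.factorial

/-- Composition `f(g(t))` of formal power series (valid definition of composition
when `g` has zero constant term, as in all uses below). -/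
noncomputable def pscomp (f g : PowerSeries ℝ) : PowerSeries ℝ :=
  PowerSeries.mk fun n =>
    ∑ k ∈ Finset.range (n + 1), (PowerSeries.coeff k f) * (PowerSeries.coeff n (g ^ k))

open PowerSeries

lemma dff_one_eq_descPochhammer_eval (n : ℕ) (x : ℝ) :
    dff 1 n x = (descPochhammer ℝ n).eval x := by
  simp [dff, descPochhammer_eval_eq_prod_range]

lemma dff_one_eq_factorial_mul_choose (n : ℕ) (x : ℝ) :
    dff 1 n x = n.factorial * Ring.choose x n := by
  rw [Ring.choose_eq_smul, smul_eq_mul, ← Polynomial.aeval_eq_smeval, Polynomial.aeval_def,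
    Polynomial.eval₂_eq_eval_map, descPochhammer_map, ← dff_one_eq_descPochhammer_eval]
  field_simp

lemma dff_eq_pow_mul_dff_one {lam : ℝ} (hlam : lam ≠ 0) (n : ℕ) (x : ℝ) :
    dff lam n x = lam ^ n * dff 1 n (x / lam) := by
  rw [dff, dff, ← Finset.card_range n, ← Finset.prod_const, Finset.card_range,
    ← Finset.prod_mul_distrib]
  refine Finset.prod_congr rfl fun i _ => ?_
  field_simp

lemma dff_natCast_mul_eq_zero (lam : ℝ) {j m : ℕ} (h : j < m) : dff lam m (j * lam) = 0 :=
  Finset.prod_eq_zero (Finset.mem_range.mpr h) (sub_self _)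

lemma dff_natCast_mul_ne_zero {lam : ℝ} (hlam : lam ≠ 0) (j : ℕ) : dff lam j (j * lam) ≠ 0 := by
  refine Finset.prod_ne_zero_iff.mpr fun i hi => ?_
  rw [← sub_mul]
  exact mul_ne_zero (sub_ne_zero.mpr (Nat.cast_injective.ne (Finset.mem_range.mp hi).ne')) hlam

lemma eq_zero_of_sum_mul_dff_eq_zero {lam : ℝ} (hlam : lam ≠ 0) {N : ℕ} {c : ℕ → ℝ}
    (h : ∀ x, ∑ k ∈ Finset.range (N + 1), c k * dff lam k x = 0) {j : ℕ} (hj : j ≤ N) :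
    c j = 0 := by
  induction j using Nat.strong_induction_on with
  | _ j ih =>
    have hsum := h (j * lam)
    rw [Finset.sum_eq_single j] at hsum
    · exact (mul_eq_zero.mp hsum).resolve_right (dff_natCast_mul_ne_zero hlam j)
    · intro k _ hkj
      rcases hkj.lt_or_gt with hlt | hgt
      · rw [ih k hlt (by omega), zero_mul]
      · rw [dff_natCast_mul_eq_zero lam hgt, mul_zero]
    · intro hj'
      exact absurd (Finset.mem_range.mpr (by omega)) hj'

lemma coeff_pow_eq_zero_of_lt {g : PowerSeries ℝ} (hg : constantCoeff g = 0) {n k : ℕ}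
    (h : n < k) : coeff n (g ^ k) = 0 :=
  coeff_of_lt_order _ ((Nat.cast_lt.mpr h).trans_le (le_order_pow_of_constantCoeff_eq_zero k hg))

lemma coeff_subst_eq_sum {g : PowerSeries ℝ} (hg : constantCoeff g = 0) (f : PowerSeries ℝ)
    {n N : ℕ} (hn : n ≤ N) :
    coeff n (f.subst g) = ∑ k ∈ Finset.range (N + 1), coeff k f * coeff n (g ^ k) := by
  rw [coeff_subst' (HasSubst.of_constantCoeff_zero' hg)]
  refine finsum_eq_finsetSum_of_support_subset _ fun k hk => ?_
  by_contra h
  simp only [Finset.coe_range, Set.mem_Iio, not_lt] at h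
  exact hk (by dsimp only; rw [coeff_pow_eq_zero_of_lt hg (by omega), smul_zero])

lemma pscomp_eq_subst {g : PowerSeries ℝ} (hg : constantCoeff g = 0) (f : PowerSeries ℝ) :
    pscomp f g = f.subst g := by
  ext n
  rw [coeff_subst_eq_sum hg f le_rfl, pscomp, coeff_mk]

lemma pscomp_pow {g : PowerSeries ℝ} (hg : constantCoeff g = 0) (f : PowerSeries ℝ) (k : ℕ) :
    pscomp f g ^ k = pscomp (f ^ k) g := by
  rw [pscomp_eq_subst hg, pscomp_eq_subst hg, subst_pow (HasSubst.of_constantCoeff_zero' hg)]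

lemma subst_one_add_X_pow {g : PowerSeries ℝ} (hg : constantCoeff g = 0) (m : ℕ) :
    ((1 + X) ^ m : PowerSeries ℝ).subst g = (1 + g) ^ m := by
  rw [← coe_substAlgHom (HasSubst.of_constantCoeff_zero' hg), map_pow, map_add, map_one,
    substAlgHom_X]

@[simp]
lemma coeff_degExp (lam x : ℝ) (n : ℕ) :
    coeff n (degExp lam x) = dff lam n x / n.factorial := by
  simp [degExp]

lemma degExp_one_eq_binomialSeries (x : ℝ) : degExp 1 x = PowerSeries.binomialSeries ℝ x := by
  ext n
  rw [coeff_degExp, binomialSeries_coeff, dff_one_eq_factorial_mul_choose, smul_eq_mul, mul_one]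
  field_simp

lemma degExp_one_natCast (m : ℕ) : degExp 1 m = (1 + X) ^ m := by
  rw [degExp_one_eq_binomialSeries, binomialSeries_nat]

lemma degExp_one_pow (x : ℝ) (m : ℕ) : degExp 1 x ^ m = degExp 1 (m * x) := by
  induction m with
  | zero => simp [degExp_one_eq_binomialSeries]
  | succ m ih =>
    rw [pow_succ, ih, Nat.cast_succ, add_one_mul]
    simp only [degExp_one_eq_binomialSeries, PowerSeries.binomialSeries_add]

lemma degExp_eq_rescale {lam : ℝ} (hlam : lam ≠ 0) (x : ℝ) :
    degExp lam x = rescale lam (degExp 1 (x / lam)) := by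
  ext n
  rw [coeff_rescale, coeff_degExp, coeff_degExp, dff_eq_pow_mul_dff_one hlam, mul_div_assoc]

lemma constantCoeff_degExp_one_sub_one (b : ℝ) : constantCoeff (degExp 1 b - 1) = 0 := by
  rw [← coeff_zero_eq_constantCoeff_apply, map_sub, coeff_degExp, coeff_one]
  simp [dff]

lemma subst_degExp_one (a b : ℝ) :
    (degExp 1 a).subst (degExp 1 b - 1) = degExp 1 (a * b) := by
  set g := degExp 1 b - 1
  have hg : constantCoeff g = 0 := constantCoeff_degExp_one_sub_one b
  ext n
  -- both coefficients are polynomial functions of `a`, and they agree at every `a ∈ ℕ`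
  let p : Polynomial ℝ := ∑ k ∈ Finset.range (n + 1),
    Polynomial.C (coeff n (g ^ k) / k.factorial) * descPochhammer ℝ k
  let q : Polynomial ℝ :=
    Polynomial.C (n.factorial : ℝ)⁻¹ * (descPochhammer ℝ n).comp (Polynomial.C b * Polynomial.X)
  have hp : ∀ x : ℝ, coeff n ((degExp 1 x).subst g) = p.eval x := by
    intro x
    simp only [coeff_subst_eq_sum hg _ le_rfl, p, Polynomial.eval_finsetSum, Polynomial.eval_mul,
      Polynomial.eval_C, coeff_degExp, dff_one_eq_descPochhammer_eval]
    exact Finset.sum_congr rfl fun k _ => by ring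
  have hq : ∀ x : ℝ, coeff n (degExp 1 (x * b)) = q.eval x := by
    intro x
    simp only [q, mul_comm x b, coeff_degExp, dff_one_eq_descPochhammer_eval, Polynomial.eval_mul,
      Polynomial.eval_C, Polynomial.eval_comp, Polynomial.eval_X]
    ring
  have hpq : p = q := by
    refine Polynomial.eq_of_infinite_eval_eq p q
      ((Set.infinite_range_of_injective Nat.cast_injective).mono ?_)
    rintro _ ⟨m, rfl⟩
    rw [Set.mem_ofPred_eq, ← hp, ← hq, degExp_one_natCast, subst_one_add_X_pow hg, add_sub_cancel,
      degExp_one_pow]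
  rw [hp, hq, hpq]

lemma constantCoeff_degLog (lam : ℝ) : constantCoeff (degLog lam) = 0 := by
  simp [← coeff_zero_eq_constantCoeff_apply, degLog]

lemma degLog_eq_smul {lam : ℝ} (hlam : lam ≠ 0) :
    degLog lam = lam⁻¹ • (degExp 1 lam - 1) := by
  ext (_ | n)
  · simp only [coeff_zero_eq_constantCoeff_apply, map_smul, constantCoeff_degExp_one_sub_one,
      constantCoeff_degLog, smul_zero]
  · have hpow : lam ^ n * (1 / lam) ^ (n + 1) = lam⁻¹ := by
      rw [one_div, inv_pow, pow_succ]
      field_simp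
    rw [degLog, coeff_mk, if_neg n.succ_ne_zero, Nat.add_sub_cancel,
      dff_eq_pow_mul_dff_one (one_div_ne_zero hlam), one_div_one_div, coeff_smul, map_sub,
      coeff_degExp, coeff_one, if_neg n.succ_ne_zero, sub_zero, ← mul_assoc, hpow, smul_eq_mul,
      mul_div_assoc]

lemma subst_degLog_degExp {lam : ℝ} (hlam : lam ≠ 0) (x : ℝ) :
    (degExp lam x).subst (degLog lam) = degExp 1 x := by
  have hL : HasSubst (degLog lam) := HasSubst.of_constantCoeff_zero' (constantCoeff_degLog lam)
  rw [degExp_eq_rescale hlam, rescale_eq_subst, subst_comp_subst_apply (HasSubst.smul_X' lam) hL,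
    subst_smul hL, subst_X hL, degLog_eq_smul hlam, smul_inv_smul₀ hlam, subst_degExp_one,
    div_mul_cancel₀ x hlam]

/-- The degenerate Stirling numbers of the first kind `S_{1,λ}(n,k)`, read off from their
generating function `(1/k!) log_λ(1+t)^k = Σ_n S_{1,λ}(n,k) t^n/n!`. -/
noncomputable def degStirling1 (lam : ℝ) (n k : ℕ) : ℝ :=
  n.factorial / k.factorial * coeff n (degLog lam ^ k)

lemma dff_one_eq_sum_degStirling1 {lam : ℝ} (hlam : lam ≠ 0) {n N : ℕ} (hn : n ≤ N) (x : ℝ) :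
    dff 1 n x = ∑ k ∈ Finset.range (N + 1), degStirling1 lam n k * dff lam k x := by
  have hcoeff := congrArg (coeff n) (subst_degLog_degExp hlam x)
  rw [coeff_subst_eq_sum (constantCoeff_degLog lam) _ hn, coeff_degExp,
    eq_div_iff (Nat.cast_ne_zero.mpr n.factorial_ne_zero)] at hcoeff
  rw [← hcoeff, Finset.sum_mul]
  refine Finset.sum_congr rfl fun k _ => ?_
  rw [coeff_degExp, degStirling1]
  ring

lemma eq_degStirling1_of_forall_dff_one_eq {lam : ℝ} (hlam : lam ≠ 0) {n : ℕ} {s : ℕ → ℝ}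
    (hs : ∀ x, dff 1 n x = ∑ l ∈ Finset.range (n + 1), s l * dff lam l x) {l : ℕ} (hl : l ≤ n) :
    s l = degStirling1 lam n l := by
  refine sub_eq_zero.mp <|
    eq_zero_of_sum_mul_dff_eq_zero (c := fun l => s l - degStirling1 lam n l) hlam (fun x => ?_) hl
  simp only [sub_mul, Finset.sum_sub_distrib, ← hs, ← dff_one_eq_sum_degStirling1 hlam le_rfl,
    sub_self]

lemma eq_sum_degStirling1_mul_degStirling1 {lam : ℝ} {k : ℕ} {s : ℕ → ℝ}
    (hs : PowerSeries.C (k.factorial : ℝ)⁻¹ * pscomp (degLog lam) (degLog lam) ^ k =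
      PowerSeries.mk fun n => if k ≤ n then s n / n.factorial else 0)
    {n : ℕ} (hk : k ≤ n) :
    s n = ∑ m ∈ Finset.range (n + 1), degStirling1 lam n m * degStirling1 lam m k := by
  have hcoeff := congrArg (coeff n) hs
  rw [pscomp_pow (constantCoeff_degLog lam), coeff_C_mul, pscomp, coeff_mk, coeff_mk, if_pos hk,
    eq_div_iff (Nat.cast_ne_zero.mpr n.factorial_ne_zero)] at hcoeff
  rw [← hcoeff, Finset.mul_sum, Finset.sum_mul]
  refine Finset.sum_congr rfl fun m _ => ?_
  rw [degStirling1, degStirling1]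
  field_simp

theorem stirling1_jindalrae1_polynomial_identity (lam : ℝ) (hlam : lam ≠ 0)
    (S1 SJ1 : ℕ → ℕ → ℝ)
    (hS1 : ∀ (n : ℕ) (x : ℝ), dff 1 n x = ∑ l ∈ Finset.range (n + 1), S1 n l * dff lam l x)
    (hSJ1 : ∀ k : ℕ, (PowerSeries.C ((k.factorial : ℝ))⁻¹) * (pscomp (degLog lam) (degLog lam)) ^ k = PowerSeries.mk (fun n => if k ≤ n then SJ1 n k / n.factorial else 0))
    : ∀ (n : ℕ) (x : ℝ), ∑ l ∈ Finset.range (n + 1), S1 n l * dff 1 l x = ∑ k ∈ Finset.range (n + 1), SJ1 n k * dff lam k x := by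
  intro n x
  calc ∑ l ∈ Finset.range (n + 1), S1 n l * dff 1 l x
      = ∑ l ∈ Finset.range (n + 1), degStirling1 lam n l *
          ∑ k ∈ Finset.range (n + 1), degStirling1 lam l k * dff lam k x := by
        refine Finset.sum_congr rfl fun l hl => ?_
        have hln : l ≤ n := Finset.mem_range_succ_iff.mp hl
        rw [eq_degStirling1_of_forall_dff_one_eq hlam (hS1 n) hln,
          dff_one_eq_sum_degStirling1 hlam hln]
    _ = ∑ k ∈ Finset.range (n + 1), (∑ l ∈ Finset.range (n + 1),
          degStirling1 lam n l * degStirling1 lam l k) * dff lam k x := by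
        simp only [Finset.mul_sum, Finset.sum_mul, mul_assoc]
        exact Finset.sum_comm
    _ = ∑ k ∈ Finset.range (n + 1), SJ1 n k * dff lam k x := by
        refine Finset.sum_congr rfl fun k hk => ?_
        rw [eq_sum_degStirling1_mul_degStirling1 (hSJ1 k) (Finset.mem_range_succ_iff.mp hk)]
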